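/- Assume R is a ℚ-algebra. Let I be an ideal of R{x̄}_{D*} with characteristic set 𝒞. If f ∈ I is reduced with respect to 𝒞, then f ∈ (I ∩ R). -/

import Mathlib

open MvPolynomial
open scoped BigOperators

/-- The variables `dᶿxⱼ` of the `D*`-polynomial ring in `n` indeterminates with `M`
operators: a pair (index of `x`, multi-exponent `θ ∈ ℕ^M`). -/
abbrev DVar (n M : ℕ) : Type := Fin n × (Fin M → ℕ)

/-- Applying the composite operator with multi-exponent `φ` to a variable. -/
def shiftVar {n M : ℕ} (u : DVar n M) (φ : Fin M → ℕ) : DVar n M :=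
  (u.1, fun l => u.2 l + φ l)

/-- `φ` encodes a composition of the associated endomorphisms only (a `σ`-transform). -/
def IsSigmaExp {M : ℕ} (σset : Finset (Fin M)) (φ : Fin M → ℕ) : Prop :=
  ∀ k, φ k ≠ 0 → k ∈ σset

/-- `φ` encodes a composition of operators involving at least one derivation-type
operator (a `δ`-transform). -/
def IsDeltaExp {M : ℕ} (σset : Finset (Fin M)) (φ : Fin M → ℕ) : Prop :=
  ∃ k, k ∉ σset ∧ φ k ≠ 0

/-- `u` is the leader of `f`: the highest-ranked variable occurring in `f`. -/
def IsLeader {R : Type} [CommRing R] {n M : ℕ} (lt : DVar n M → DVar n M → Prop)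
    (f : MvPolynomial (DVar n M) R) (u : DVar n M) : Prop :=
  u ∈ f.vars ∧ ∀ v ∈ f.vars, v ≠ u → lt v u

/-- `f` lies in (the image of) `R`, i.e. is a constant polynomial. -/
def IsConst {R : Type} [CommRing R] {n M : ℕ} (f : MvPolynomial (DVar n M) R) : Prop :=
  ∃ r : R, f = C r

/-- `g` is reduced with respect to `f`: `g` contains no `δ`-transform of the leader of
`f`, and every `σ`-transform of the leader of `f` occurs in `g` with degree `< deg f`. -/
def ReducedWrt {R : Type} [CommRing R] {n M : ℕ} (lt : DVar n M → DVar n M → Prop)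
    (σset : Finset (Fin M)) (g f : MvPolynomial (DVar n M) R) : Prop :=
  ∀ u : DVar n M, IsLeader lt f u →
    (∀ φ : Fin M → ℕ, IsDeltaExp σset φ → shiftVar u φ ∉ g.vars) ∧
    (∀ φ : Fin M → ℕ, IsSigmaExp σset φ →
      degreeOf (shiftVar u φ) g < degreeOf u f)

/-- `g` is reduced with respect to every element of `A`. -/
def ReducedWrtSet {R : Type} [CommRing R] {n M : ℕ} (lt : DVar n M → DVar n M → Prop)
    (σset : Finset (Fin M)) (g : MvPolynomial (DVar n M) R)
    (A : Set (MvPolynomial (DVar n M) R)) : Prop :=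
  ∀ f ∈ A, ReducedWrt lt σset g f

/-- `A` is autoreduced: no element is constant and any two distinct elements are reduced
with respect to each other. -/
def Autoreduced {R : Type} [CommRing R] {n M : ℕ} (lt : DVar n M → DVar n M → Prop)
    (σset : Finset (Fin M)) (A : Set (MvPolynomial (DVar n M) R)) : Prop :=
  (∀ f ∈ A, ¬ IsConst f) ∧
  ∀ f ∈ A, ∀ g ∈ A, f ≠ g → ReducedWrt lt σset g f

/-- `rk f < rk g`: the leader of `f` is below that of `g`, or they coincide and the
leading degree of `f` is smaller. -/
def RkLt {R : Type} [CommRing R] {n M : ℕ} (lt : DVar n M → DVar n M → Prop)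
    (f g : MvPolynomial (DVar n M) R) : Prop :=
  ∃ uf ug, IsLeader lt f uf ∧ IsLeader lt g ug ∧
    (lt uf ug ∨ (uf = ug ∧ degreeOf uf f < degreeOf ug g))

/-- `rk f = rk g`: same leader and same leading degree. -/
def RkEq {R : Type} [CommRing R] {n M : ℕ} (lt : DVar n M → DVar n M → Prop)
    (f g : MvPolynomial (DVar n M) R) : Prop :=
  ∃ uf ug, IsLeader lt f uf ∧ IsLeader lt g ug ∧ uf = ug ∧
    degreeOf uf f = degreeOf ug g

/-- `rk f ≤ rk g` (with constants of lowest rank). -/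
def RkLe {R : Type} [CommRing R] {n M : ℕ} (lt : DVar n M → DVar n M → Prop)
    (f g : MvPolynomial (DVar n M) R) : Prop :=
  IsConst f ∨ RkLt lt f g ∨ RkEq lt f g

/-- `lt` is a ranking of the variables, with `σ`-operators `σset` and operator ranks `ν`. -/
structure IsRanking {n M : ℕ} (lt : DVar n M → DVar n M → Prop)
    (σset : Finset (Fin M)) (ν : Fin M → ℕ) : Prop where
  trichot : ∀ u v, lt u v ∨ u = v ∨ lt v u
  irrefl : ∀ u, ¬ lt u u
  trans : ∀ u v w, lt u v → lt v w → lt u w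
  wf : WellFounded lt
  lt_op : ∀ (u : DVar n M) (k : Fin M), lt u (shiftVar u (Pi.single k 1))
  mono : ∀ (u v : DVar n M) (k : Fin M), lt u v →
    lt (shiftVar u (Pi.single k 1)) (shiftVar v (Pi.single k 1))
  op_ord : ∀ (u : DVar n M) (k k' : Fin M), ν k < ν k' →
    lt (shiftVar u (Pi.single k 1)) (shiftVar u (Pi.single k' 1))
  nu_sigma : ∀ k ∈ σset, ν k = 0

/-- Lexicographic comparison of two rank-sorted lists of `D*`-polynomials. -/
def PrecList {R : Type} [CommRing R] {n M : ℕ} (lt : DVar n M → DVar n M → Prop)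
    (la lb : List (MvPolynomial (DVar n M) R)) : Prop :=
  (∃ i : ℕ, i < la.length ∧ i < lb.length ∧
      RkLt lt (la.getD i 0) (lb.getD i 0) ∧
      ∀ j < i, RkEq lt (la.getD j 0) (lb.getD j 0)) ∨
  (lb.length < la.length ∧ ∀ i < lb.length, RkEq lt (la.getD i 0) (lb.getD i 0))

/-- The pre-order `A ≺ B` on autoreduced (finite) sets of `D*`-polynomials. -/
def Prec {R : Type} [CommRing R] {n M : ℕ} (lt : DVar n M → DVar n M → Prop)
    (A B : Finset (MvPolynomial (DVar n M) R)) : Prop :=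
  ∃ la lb : List (MvPolynomial (DVar n M) R),
    la.Nodup ∧ lb.Nodup ∧ (∀ f, f ∈ la ↔ f ∈ A) ∧ (∀ f, f ∈ lb ↔ f ∈ B) ∧
    la.Pairwise (RkLt lt) ∧ lb.Pairwise (RkLt lt) ∧ PrecList lt la lb

/-- The initial of `f` with respect to the variable `u`: the leading coefficient of `f`
viewed as a univariate polynomial in `u`. -/
noncomputable def initialOf {R : Type} [CommRing R] {n M : ℕ} (u : DVar n M)
    (f : MvPolynomial (DVar n M) R) : MvPolynomial (DVar n M) R :=
  ∑ d ∈ f.support.filter (fun d => d u = degreeOf u f),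
    monomial (d.erase u) (coeff d f)

/-- `𝒞` is a characteristic set of the ideal `I`: a minimal element (for `≺`) of the
collection of autoreduced subsets `A ⊆ I` with `s_f ∉ I` for all `f ∈ A`. -/
def IsCharSet {R : Type} [CommRing R] {n M : ℕ} (lt : DVar n M → DVar n M → Prop)
    (σset : Finset (Fin M)) (I : Ideal (MvPolynomial (DVar n M) R))
    (𝒞 : Finset (MvPolynomial (DVar n M) R)) : Prop :=
  (Autoreduced lt σset (𝒞 : Set (MvPolynomial (DVar n M) R)) ∧
    (𝒞 : Set (MvPolynomial (DVar n M) R)) ⊆ (I : Set (MvPolynomial (DVar n M) R)) ∧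
    ∀ f ∈ 𝒞, ∀ u : DVar n M, IsLeader lt f u → pderiv u f ∉ I) ∧
  ∀ B : Finset (MvPolynomial (DVar n M) R),
    Autoreduced lt σset (B : Set (MvPolynomial (DVar n M) R)) →
    (B : Set (MvPolynomial (DVar n M) R)) ⊆ (I : Set (MvPolynomial (DVar n M) R)) →
    (∀ f ∈ B, ∀ u : DVar n M, IsLeader lt f u → pderiv u f ∉ I) →
    ¬ Prec lt B 𝒞

/-!
Induction on the rank of `f` (its leader `u`, then its degree in `u`). By minimality of the
characteristic set, the separant `∂f/∂u` lies in `I`: otherwise `f` together with the elements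
of `𝒞` of lower leader would be an admissible autoreduced set preceding `𝒞`. The separant is
reduced and of lower rank, so by induction its coefficients lie in `I ∩ R`. Since `R` is a
`ℚ`-algebra, every coefficient of `f` at a monomial involving `u` is such a coefficient divided
by a positive integer. Removing those monomials leaves an element of `I` free of `u`, again
reduced and of lower rank.
-/

section MvPolynomial

variable {σ R : Type*} [CommRing R]

lemma vars_subset_of_forall_exists_le {p q : MvPolynomial σ R}
    (h : ∀ m ∈ q.support, ∃ m' ∈ p.support, m ≤ m') : q.vars ⊆ p.vars := by
  classical
  intro v hv
  obtain ⟨m, hm, hvm⟩ := (mem_vars_iff_mem_support v).mp hv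
  obtain ⟨m', hm', hle⟩ := h m hm
  exact (mem_vars_iff_mem_support v).mpr ⟨m', hm', Finsupp.support_mono hle hvm⟩

lemma degreeOf_le_of_forall_exists_le {p q : MvPolynomial σ R}
    (h : ∀ m ∈ q.support, ∃ m' ∈ p.support, m ≤ m') (v : σ) : degreeOf v q ≤ degreeOf v p :=
  degreeOf_le_iff.mpr fun m hm =>
    let ⟨_, hm', hle⟩ := h m hm
    (hle v).trans (monomial_le_degreeOf v hm')

lemma degreeOf_lt_degreeOf_of_notMem_vars {p q : MvPolynomial σ R} {i : σ} (hq : i ∉ q.vars)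
    (hp : i ∈ p.vars) : degreeOf i q < degreeOf i p := by
  rw [mem_vars_iff_degreeOf_ne_zero, not_not] at hq
  rw [mem_vars_iff_degreeOf_ne_zero] at hp
  omega

lemma mem_map_C_comap_of_vars_eq_empty {I : Ideal (MvPolynomial σ R)} {p : MvPolynomial σ R}
    (hp : p.vars = ∅) (hpI : p ∈ I) : p ∈ (I.comap C).map C := by
  rw [vars_eq_empty_iff_eq_C] at hp
  rw [hp] at hpI ⊢
  exact Ideal.mem_map_of_mem _ hpI

lemma add_single_mem_support_of_mem_support_pderiv {p : MvPolynomial σ R} {i : σ}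
    {m : σ →₀ ℕ} (hm : m ∈ (pderiv i p).support) : m + Finsupp.single i 1 ∈ p.support := by
  rw [mem_support_iff, coeff_pderiv] at hm
  exact mem_support_iff.mpr (left_ne_zero_of_mul hm)

lemma coeff_mem_of_pderiv_mem_map_C [Algebra ℚ R] {K : Ideal R} {p : MvPolynomial σ R} {i : σ}
    (h : pderiv i p ∈ K.map C) {m : σ →₀ ℕ} (hm : m i ≠ 0) : coeff m p ∈ K := by
  have hle : Finsupp.single i 1 ≤ m := Finsupp.single_le_iff.mpr (Nat.one_le_iff_ne_zero.mpr hm)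
  have hcoeff := mem_map_C_iff.mp h (m - Finsupp.single i 1)
  rw [coeff_pderiv, tsub_add_cancel_of_le hle, Finsupp.tsub_apply, Finsupp.single_eq_same,
    Nat.cast_sub (Nat.one_le_iff_ne_zero.mpr hm), Nat.cast_one, sub_add_cancel] at hcoeff
  have hunit : IsUnit (m i : R) := by
    simpa using (IsUnit.mk0 (m i : ℚ) (Nat.cast_ne_zero.mpr hm)).map (algebraMap ℚ R)
  exact (K.mul_unit_mem_iff_mem hunit).mp hcoeff

lemma degreeOf_pderiv_lt {p : MvPolynomial σ R} {i : σ} (hi : i ∈ p.vars) :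
    degreeOf i (pderiv i p) < degreeOf i p := by
  rw [mem_vars_iff_degreeOf_ne_zero] at hi
  refine (degreeOf_lt_iff (Nat.pos_of_ne_zero hi)).mpr fun m hm => ?_
  have := monomial_le_degreeOf i (add_single_mem_support_of_mem_support_pderiv hm)
  simp only [Finsupp.coe_add, Pi.add_apply, Finsupp.single_eq_same] at this
  omega

lemma support_weightedHomogeneousComponent_subset {M : Type*} [AddCommMonoid M] (w : σ → M)
    (n : M) (p : MvPolynomial σ R) : (weightedHomogeneousComponent w n p).support ⊆ p.support := by
  classical
  intro m hm
  rw [mem_support_iff, coeff_weightedHomogeneousComponent] at hm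
  exact mem_support_iff.mpr fun h => hm (by simp [h])

variable [DecidableEq σ]

-- `weightedHomogeneousComponent (Pi.single i 1) 0 p` is the part of `p` free of `X i`.
lemma coeff_weightedHomogeneousComponent_single_zero (i : σ) (p : MvPolynomial σ R)
    (m : σ →₀ ℕ) : coeff m (weightedHomogeneousComponent (Pi.single i 1) 0 p) =
      if m i = 0 then coeff m p else 0 := by
  rw [coeff_weightedHomogeneousComponent, Finsupp.weight_single_one_apply]

lemma notMem_vars_weightedHomogeneousComponent_single_zero (i : σ) (p : MvPolynomial σ R) :
    i ∉ (weightedHomogeneousComponent (Pi.single i 1) 0 p).vars := by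
  rw [mem_vars_iff_mem_support]
  rintro ⟨m, hm, hi⟩
  rw [mem_support_iff, coeff_weightedHomogeneousComponent_single_zero] at hm
  exact Finsupp.mem_support_iff.mp hi (by_contra fun h => hm (if_neg h))

lemma sub_weightedHomogeneousComponent_single_zero_mem_map_C [Algebra ℚ R] {K : Ideal R}
    {p : MvPolynomial σ R} {i : σ} (h : pderiv i p ∈ K.map C) :
    p - weightedHomogeneousComponent (Pi.single i 1) 0 p ∈ K.map C := by
  refine mem_map_C_iff.mpr fun m => ?_
  rw [coeff_sub, coeff_weightedHomogeneousComponent_single_zero]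
  split_ifs with hm
  · simp
  · simpa using coeff_mem_of_pderiv_mem_map_C h hm

end MvPolynomial

lemma Ideal.span_inter_range_eq_map_comap {A B : Type*} [CommRing A] [CommRing B] (φ : A →+* B)
    (I : Ideal B) : Ideal.span ((I : Set B) ∩ Set.range φ) = (I.comap φ).map φ := by
  rw [Ideal.map, Ideal.coe_comap, Set.image_preimage_eq_inter_range]

lemma WellFounded.exists_list_pairwise {α : Type*} {r : α → α → Prop} (hr : WellFounded r)
    (s : Finset α) (htot : ∀ a ∈ s, ∀ b ∈ s, a ≠ b → r a b ∨ r b a) :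
    ∃ l : List α, (∀ x, x ∈ l ↔ x ∈ s) ∧ l.Pairwise r := by
  classical
  induction s using Finset.strongInduction with
  | _ s ih =>
    rcases s.eq_empty_or_nonempty with rfl | hs
    · exact ⟨[], by simp, by simp⟩
    obtain ⟨a, ha, hmin⟩ := hr.has_min s hs
    rw [Finset.mem_coe] at ha
    obtain ⟨l, hmem, hpw⟩ := ih (s.erase a) (Finset.erase_ssubset ha)
      fun x hx y hy => htot x (Finset.mem_of_mem_erase hx) y (Finset.mem_of_mem_erase hy)
    have hbelow : ∀ b ∈ s.erase a, r a b := fun b hb =>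
      (htot a ha b (Finset.mem_of_mem_erase hb) (Finset.ne_of_mem_erase hb).symm).resolve_right
        (hmin b (Finset.mem_of_mem_erase hb))
    refine ⟨a :: l, fun x => ?_,
      List.pairwise_cons.mpr ⟨fun b hb => hbelow b ((hmem b).mp hb), hpw⟩⟩
    rw [List.mem_cons, hmem, Finset.mem_erase]
    by_cases hxa : x = a <;> simp [hxa, ha]

section DPoly

variable {R : Type} [CommRing R] {n M : ℕ} {lt : DVar n M → DVar n M → Prop}
  {σset : Finset (Fin M)} {ν : Fin M → ℕ}

lemma shiftVar_zero (u : DVar n M) : shiftVar u 0 = u := rfl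

lemma shiftVar_add (u : DVar n M) (φ ψ : Fin M → ℕ) :
    shiftVar u (φ + ψ) = shiftVar (shiftVar u φ) ψ := by
  simp [shiftVar, add_assoc]

lemma IsRanking.lt_or_eq_shiftVar (hr : IsRanking lt σset ν) (u : DVar n M) (φ : Fin M → ℕ) :
    lt u (shiftVar u φ) ∨ u = shiftVar u φ := by
  induction φ using WellFoundedLT.induction with
  | _ φ ih =>
    by_cases hφ : φ = 0
    · exact Or.inr (by rw [hφ, shiftVar_zero])
    obtain ⟨k, hk⟩ := Function.ne_iff.mp hφ
    rw [Pi.zero_apply] at hk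
    have hle : Pi.single k 1 ≤ φ := fun l => by
      rcases eq_or_ne l k with rfl | h
      · simpa [Nat.one_le_iff_ne_zero] using hk
      · simp [h]
    have hlt : φ - Pi.single k 1 < φ := by
      refine lt_of_le_of_ne tsub_le_self fun h => hk ?_
      have := congrFun h k
      simp only [Pi.sub_apply, Pi.single_eq_same] at this
      omega
    have hstep : lt (shiftVar u (φ - Pi.single k 1)) (shiftVar u φ) := by
      conv_rhs => rw [← tsub_add_cancel_of_le hle, shiftVar_add]
      exact hr.lt_op _ k
    rcases ih _ hlt with h | h
    · exact Or.inl (hr.trans _ _ _ h hstep)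
    · nth_rw 1 [h]
      exact Or.inl hstep

lemma IsLeader.unique (hr : IsRanking lt σset ν) {f : MvPolynomial (DVar n M) R} {u v : DVar n M}
    (hu : IsLeader lt f u) (hv : IsLeader lt f v) : u = v := by
  by_contra h
  exact hr.irrefl u (hr.trans _ _ _ (hv.2 u hu.1 h) (hu.2 v hv.1 (Ne.symm h)))

lemma IsLeader.notMem_vars_of_lt (hr : IsRanking lt σset ν) {f : MvPolynomial (DVar n M) R}
    {u v : DVar n M} (hu : IsLeader lt f u) (huv : lt u v) : v ∉ f.vars := fun hv =>
  hr.irrefl u (hr.trans _ _ _ huv (hu.2 v hv fun h => hr.irrefl u (h ▸ huv)))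

lemma IsLeader.not_isConst {f : MvPolynomial (DVar n M) R} {u : DVar n M}
    (hu : IsLeader lt f u) : ¬ IsConst f := by
  rintro ⟨r, rfl⟩
  simpa using hu.1

lemma IsRanking.exists_isLeader (hr : IsRanking lt σset ν) {f : MvPolynomial (DVar n M) R}
    (hf : f.vars.Nonempty) : ∃ u, IsLeader lt f u := by
  obtain ⟨l, hmem, hpw⟩ := hr.wf.exists_list_pairwise f.vars fun a _ b _ hab =>
    (hr.trichot a b).imp_right (Or.resolve_left · hab)
  obtain ⟨l, u, rfl⟩ := (List.eq_nil_or_concat l).resolve_left fun h => by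
    obtain ⟨x, hx⟩ := hf
    simpa [h] using (hmem x).mpr hx
  rw [List.concat_eq_append] at hmem hpw
  refine ⟨u, (hmem u).mp (by simp), fun v hv hvu => ?_⟩
  rcases List.mem_append.mp ((hmem v).mpr hv) with hv | hv
  · exact (List.pairwise_append.mp hpw).2.2 v hv u (by simp)
  · exact absurd (List.mem_singleton.mp hv) hvu

lemma IsRanking.exists_isLeader_of_not_isConst (hr : IsRanking lt σset ν)
    {f : MvPolynomial (DVar n M) R} (hf : ¬ IsConst f) : ∃ u, IsLeader lt f u := by
  refine hr.exists_isLeader (Finset.nonempty_iff_ne_empty.mpr fun h => hf ?_)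
  exact ⟨_, vars_eq_empty_iff_eq_C.mp h⟩

lemma IsRanking.wellFounded_rkLt (hr : IsRanking lt σset ν) :
    WellFounded (RkLt lt : MvPolynomial (DVar n M) R → _ → Prop) := by
  -- `RkLt` is the lexicographic order on (leader, leading degree)
  suffices H : ∀ p, Acc (Prod.Lex lt (· < ·)) p → ∀ (f : MvPolynomial (DVar n M) R) u,
      IsLeader lt f u → p = (u, degreeOf u f) → Acc (RkLt lt) f by
    refine ⟨fun f => Acc.intro f fun g hgf => ?_⟩
    have ⟨_, uf, _, huf, _⟩ := hgf
    exact (H _ ((hr.wf.prod_lex wellFounded_lt).apply _) f uf huf rfl).inv hgf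
  intro p hp
  induction hp with
  | intro p _ ih =>
    rintro f u hu rfl
    refine Acc.intro f fun g ⟨ug, uf, hug, huf, hlt⟩ => ?_
    obtain rfl := hu.unique hr huf
    refine ih (ug, degreeOf ug g) ?_ g ug hug rfl
    rcases hlt with h | ⟨rfl, h⟩
    · exact Prod.Lex.left _ _ h
    · exact Prod.Lex.right _ h

lemma rkLt_trans (hr : IsRanking lt σset ν) {f g h : MvPolynomial (DVar n M) R}
    (hfg : RkLt lt f g) (hgh : RkLt lt g h) : RkLt lt f h := by
  obtain ⟨uf, ug, huf, hug, hfg⟩ := hfg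
  obtain ⟨ug', uh, hug', huh, hgh⟩ := hgh
  obtain rfl := hug'.unique hr hug
  refine ⟨uf, uh, huf, huh, ?_⟩
  rcases hfg with h₁ | ⟨rfl, h₁⟩ <;> rcases hgh with h₂ | ⟨rfl, h₂⟩
  · exact Or.inl (hr.trans _ _ _ h₁ h₂)
  · exact Or.inl h₁
  · exact Or.inl h₂
  · exact Or.inr ⟨rfl, h₁.trans h₂⟩

lemma RkLt.rkEq_self {f g : MvPolynomial (DVar n M) R} (h : RkLt lt f g) : RkEq lt f f :=
  let ⟨u, _, hu, _⟩ := h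
  ⟨u, u, hu, hu, rfl, rfl⟩

lemma rkLt_of_reducedWrt (hr : IsRanking lt σset ν) {f g : MvPolynomial (DVar n M) R}
    {u w : DVar n M} (hu : IsLeader lt f u) (hw : IsLeader lt g w)
    (hred : ReducedWrt lt σset f g) (hwu : ¬ lt w u) : RkLt lt f g := by
  refine ⟨u, w, hu, hw, ?_⟩
  rcases hr.trichot w u with h | rfl | h
  · exact absurd h hwu
  · exact Or.inr ⟨rfl, (hred w hw).2 0 fun k hk => absurd rfl hk⟩
  · exact Or.inl h

lemma Autoreduced.rkLt_total (hr : IsRanking lt σset ν) {A : Set (MvPolynomial (DVar n M) R)}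
    (hA : Autoreduced lt σset A) :
    ∀ f ∈ A, ∀ g ∈ A, f ≠ g → RkLt lt f g ∨ RkLt lt g f := by
  intro f hf g hg hfg
  obtain ⟨u, hu⟩ := hr.exists_isLeader_of_not_isConst (hA.1 f hf)
  obtain ⟨w, hw⟩ := hr.exists_isLeader_of_not_isConst (hA.1 g hg)
  by_cases hwu : lt w u
  · exact Or.inr ⟨w, u, hw, hu, Or.inl hwu⟩
  · exact Or.inl (rkLt_of_reducedWrt hr hu hw (hA.2 g hg f hf hfg.symm) hwu)

lemma rkLt_of_vars_subset (hr : IsRanking lt σset ν) {f g : MvPolynomial (DVar n M) R}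
    {u : DVar n M} (hu : IsLeader lt f u) (hg : g.vars.Nonempty) (hvars : g.vars ⊆ f.vars)
    (hdeg : degreeOf u g < degreeOf u f) : RkLt lt g f := by
  obtain ⟨w, hw⟩ := hr.exists_isLeader hg
  refine ⟨w, u, hw, hu, ?_⟩
  by_cases hwu : w = u
  · exact Or.inr ⟨hwu, hwu ▸ hdeg⟩
  · exact Or.inl (hu.2 w (hvars hw.1) hwu)

lemma reducedWrt_of_leader_lt (hr : IsRanking lt σset ν) {f g : MvPolynomial (DVar n M) R}
    {u w : DVar n M} (hu : IsLeader lt f u) (hw : IsLeader lt g w) (hwu : lt w u) :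
    ReducedWrt lt σset g f := by
  intro u' hu'
  obtain rfl := hu'.unique hr hu
  have hshift (φ : Fin M → ℕ) : shiftVar u' φ ∉ g.vars := by
    refine hw.notMem_vars_of_lt hr ?_
    rcases hr.lt_or_eq_shiftVar u' φ with h | h
    · exact hr.trans _ _ _ hwu h
    · exact h ▸ hwu
  refine ⟨fun φ _ => hshift φ, fun φ _ => ?_⟩
  have h0 := hshift φ
  rw [mem_vars_iff_degreeOf_ne_zero, not_not] at h0
  rw [h0]
  exact Nat.pos_of_ne_zero (mem_vars_iff_degreeOf_ne_zero.mp hu'.1)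

lemma ReducedWrt.of_forall_exists_le {f g h : MvPolynomial (DVar n M) R}
    (hdom : ∀ m ∈ g.support, ∃ m' ∈ f.support, m ≤ m') (hf : ReducedWrt lt σset f h) :
    ReducedWrt lt σset g h := fun u hu =>
  ⟨fun φ hφ hmem => (hf u hu).1 φ hφ (vars_subset_of_forall_exists_le hdom hmem),
    fun φ hφ => (degreeOf_le_of_forall_exists_le hdom _).trans_lt ((hf u hu).2 φ hφ)⟩

lemma Autoreduced.mono {A B : Set (MvPolynomial (DVar n M) R)} (hA : Autoreduced lt σset A)
    (hBA : B ⊆ A) : Autoreduced lt σset B :=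
  ⟨fun f hf => hA.1 f (hBA hf), fun f hf g hg => hA.2 f (hBA hf) g (hBA hg)⟩

lemma Autoreduced.insert {A : Set (MvPolynomial (DVar n M) R)} (hA : Autoreduced lt σset A)
    {f : MvPolynomial (DVar n M) R} {u : DVar n M} (hu : IsLeader lt f u)
    (hfA : ReducedWrtSet lt σset f A) (hAf : ∀ g ∈ A, ReducedWrt lt σset g f) :
    Autoreduced lt σset (insert f A) := by
  refine ⟨?_, ?_⟩
  · rintro g (rfl | hg)
    exacts [hu.not_isConst, hA.1 g hg]
  · rintro g (rfl | hg) h (rfl | hh) hgh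
    · exact absurd rfl hgh
    · exact hAf h hh
    · exact hfA g hg
    · exact hA.2 g hg h hh hgh

end DPoly

section CharSet

variable {R : Type} [CommRing R] {n M : ℕ} {lt : DVar n M → DVar n M → Prop}
  {σset : Finset (Fin M)} {ν : Fin M → ℕ}

lemma precList_append_singleton {l l' : List (MvPolynomial (DVar n M) R)}
    {f : MvPolynomial (DVar n M) R} (hl : ∀ g ∈ l, RkEq lt g g) (hl' : ∀ g ∈ l', RkLt lt f g) :
    PrecList lt (l ++ [f]) (l ++ l') := by
  have hprefix : ∀ j < l.length, RkEq lt ((l ++ [f]).getD j 0) ((l ++ l').getD j 0) := by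
    intro j hj
    rw [List.getD_append _ _ _ _ hj, List.getD_append _ _ _ _ hj, List.getD_eq_getElem _ _ hj]
    exact hl _ (List.getElem_mem hj)
  cases l' with
  | nil => exact Or.inr ⟨by simp, by simpa using hprefix⟩
  | cons g l' =>
    refine Or.inl ⟨l.length, by simp, by simp, ?_, hprefix⟩
    simpa using hl' g List.mem_cons_self

lemma prec_insert_filter (hr : IsRanking lt σset ν) {𝒞 : Finset (MvPolynomial (DVar n M) R)}
    (htot : ∀ a ∈ 𝒞, ∀ b ∈ 𝒞, a ≠ b → RkLt lt a b ∨ RkLt lt b a)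
    {f : MvPolynomial (DVar n M) R} (p : MvPolynomial (DVar n M) R → Prop) [DecidablePred p]
    [DecidableEq (MvPolynomial (DVar n M) R)] (hlow : ∀ g ∈ 𝒞, p g → RkLt lt g f)
    (hhigh : ∀ g ∈ 𝒞, ¬ p g → RkLt lt f g) : Prec lt (insert f (𝒞.filter p)) 𝒞 := by
  obtain ⟨l, hmem, hpw⟩ := hr.wellFounded_rkLt.exists_list_pairwise 𝒞 htot
  have := (hr.wellFounded_rkLt (R := R)).irrefl
  have hlow' : ∀ g ∈ l.filter p, RkLt lt g f := fun g hg => by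
    simp only [List.mem_filter, decide_eq_true_eq, hmem] at hg
    exact hlow g hg.1 hg.2
  have hhigh' : ∀ g ∈ l.filter (¬ p ·), RkLt lt f g := fun g hg => by
    simp only [List.mem_filter, decide_eq_true_eq, hmem] at hg
    exact hhigh g hg.1 hg.2
  have hpwa : (l.filter p ++ [f]).Pairwise (RkLt lt) := List.pairwise_append.mpr
    ⟨hpw.filter _, List.pairwise_singleton _ _,
      fun a ha b hb => List.mem_singleton.mp hb ▸ hlow' a ha⟩
  have hpwb : (l.filter p ++ l.filter (¬ p ·)).Pairwise (RkLt lt) := List.pairwise_append.mpr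
    ⟨hpw.filter _, hpw.filter _, fun a ha b hb => rkLt_trans hr (hlow' a ha) (hhigh' b hb)⟩
  refine ⟨_, _, hpwa.nodup, hpwb.nodup, fun g => ?_, fun g => ?_, hpwa, hpwb,
    precList_append_singleton (fun g hg => (hlow' g hg).rkEq_self) hhigh'⟩
  · simp [hmem, or_comm]
  · by_cases hg : p g <;> simp [hmem, hg]

theorem IsCharSet.pderiv_mem (hr : IsRanking lt σset ν) {I : Ideal (MvPolynomial (DVar n M) R)}
    {𝒞 : Finset (MvPolynomial (DVar n M) R)} (h𝒞 : IsCharSet lt σset I 𝒞)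
    {f : MvPolynomial (DVar n M) R} (hfI : f ∈ I)
    (hred : ReducedWrtSet lt σset f (𝒞 : Set (MvPolynomial (DVar n M) R))) {u : DVar n M}
    (hu : IsLeader lt f u) : pderiv u f ∈ I := by
  classical
  obtain ⟨⟨hauto, hsub, hsep⟩, hmin⟩ := h𝒞
  by_contra hP
  let below (g : MvPolynomial (DVar n M) R) := ∃ w, IsLeader lt g w ∧ lt w u
  have hlow (g) (hg : g ∈ 𝒞.filter below) : g ∈ 𝒞 ∧ below g := Finset.mem_filter.mp hg
  refine hmin (insert f (𝒞.filter below)) ?_ ?_ ?_ (prec_insert_filter hr (hauto.rkLt_total hr)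
    below (fun g _ ⟨w, hw, hwu⟩ => ⟨w, u, hw, hu, Or.inl hwu⟩) fun g hg hgu => ?_)
  · rw [Finset.coe_insert]
    refine (hauto.mono fun g hg => (hlow g hg).1).insert hu (fun g hg => hred g (hlow g hg).1)
      fun g hg => ?_
    obtain ⟨w, hw, hwu⟩ := (hlow g hg).2
    exact reducedWrt_of_leader_lt hr hu hw hwu
  · rw [Finset.coe_insert]
    exact Set.insert_subset hfI fun g hg => hsub (hlow g hg).1
  · intro g hg v hv
    rcases Finset.mem_insert.mp hg with rfl | hg
    · rwa [hv.unique hr hu]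
    · exact hsep g (hlow g hg).1 v hv
  · obtain ⟨w, hw⟩ := hr.exists_isLeader_of_not_isConst (hauto.1 g hg)
    exact rkLt_of_reducedWrt hr hu hw (hred g hg) fun hwu => hgu ⟨w, hw, hwu⟩

theorem IsCharSet.mem_map_C_comap [Algebra ℚ R] (hr : IsRanking lt σset ν)
    {I : Ideal (MvPolynomial (DVar n M) R)} {𝒞 : Finset (MvPolynomial (DVar n M) R)}
    (h𝒞 : IsCharSet lt σset I 𝒞) (f : MvPolynomial (DVar n M) R) (hfI : f ∈ I)
    (hred : ReducedWrtSet lt σset f (𝒞 : Set (MvPolynomial (DVar n M) R))) :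
    f ∈ (I.comap C).map C := by
  induction f using hr.wellFounded_rkLt.induction with
  | _ f ih =>
    rcases f.vars.eq_empty_or_nonempty with hv | hv
    · exact mem_map_C_comap_of_vars_eq_empty hv hfI
    obtain ⟨u, hu⟩ := hr.exists_isLeader hv
    have hbelow (g : MvPolynomial (DVar n M) R) (hgI : g ∈ I)
        (hdom : ∀ m ∈ g.support, ∃ m' ∈ f.support, m ≤ m')
        (hdeg : degreeOf u g < degreeOf u f) : g ∈ (I.comap C).map C := by
      rcases g.vars.eq_empty_or_nonempty with hg | hg
      · exact mem_map_C_comap_of_vars_eq_empty hg hgI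
      exact ih g (rkLt_of_vars_subset hr hu hg (vars_subset_of_forall_exists_le hdom) hdeg) hgI
        fun c hc => (hred c hc).of_forall_exists_le hdom
    have hderiv : pderiv u f ∈ (I.comap C).map C :=
      hbelow _ (h𝒞.pderiv_mem hr hfI hred hu)
        (fun m hm => ⟨_, add_single_mem_support_of_mem_support_pderiv hm, le_self_add⟩)
        (degreeOf_pderiv_lt hu.1)
    -- modulo `(I ∩ R)`, `f` equals its part `f₀` free of the leader `u`
    set f₀ := weightedHomogeneousComponent (Pi.single u 1) 0 f
    have hf₀ : f - f₀ ∈ (I.comap C).map C :=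
      sub_weightedHomogeneousComponent_single_zero_mem_map_C hderiv
    have hf₀I : f₀ ∈ I := by
      simpa using I.sub_mem hfI (Ideal.map_comap_le hf₀)
    have hf₀mem : f₀ ∈ (I.comap C).map C := hbelow f₀ hf₀I
      (fun m hm => ⟨m, support_weightedHomogeneousComponent_subset _ _ _ hm, le_rfl⟩)
      (degreeOf_lt_degreeOf_of_notMem_vars
        (notMem_vars_weightedHomogeneousComponent_single_zero u f) hu.1)
    simpa using add_mem hf₀mem hf₀

end CharSet

/-- Assume `R` is a `ℚ`-algebra. If `𝒞` is a characteristic set of an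
ideal `I` of the `D*`-polynomial ring and `f ∈ I` is reduced with respect to `𝒞`, then
`f` lies in the ideal `(I ∩ R)` generated by the constants of `I`. -/
theorem reduced_mem_constant_ideal_of_charZero {R : Type} [CommRing R] [Algebra ℚ R]
    {n M : ℕ}
    (lt : DVar n M → DVar n M → Prop) (σset : Finset (Fin M)) (ν : Fin M → ℕ)
    (hrank : IsRanking lt σset ν)
    (I : Ideal (MvPolynomial (DVar n M) R))
    (𝒞 : Finset (MvPolynomial (DVar n M) R))
    (h𝒞 : IsCharSet lt σset I 𝒞)
    (f : MvPolynomial (DVar n M) R) (hfI : f ∈ I)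
    (hred : ReducedWrtSet lt σset f (𝒞 : Set (MvPolynomial (DVar n M) R))) :
    f ∈ Ideal.span ((I : Set (MvPolynomial (DVar n M) R)) ∩
      Set.range (C : R →+* MvPolynomial (DVar n M) R)) := by
  rw [Ideal.span_inter_range_eq_map_comap]
  exact h𝒞.mem_map_C_comap hrank f hfI hred
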